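/- Fix an integer g ≥ 1 and suppose I_i, V_i, I'_i, V'_i ∈ ℂ (i taken cyclically in {1,…,g+1}, i.e. modulo g+1) satisfy the discrete periodic Toda relations I'_i = I_i + V_i − V'_{i−1} and I'_i·V'_i = I_{i+1}·V_i for all i. Set a_i = I_{i+1} + V_i, b_i = I_i·V_i, and likewise a'_i, b'_i from the primed variables. Then for every nonzero y ∈ ℂ the Lax equation L'(y)·M(y) = M(y)·L(y) holds, where L(y) (resp. L'(y)) and M(y) are the (g+1)×(g+1) matrices defined below from (a_i,b_i) (resp. (a'_i,b'_i)) and (I_i). -/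

import Mathlib

/-!
Let `S` be the matrix with ones on the superdiagonal and `(-1)^g y` in position `(g+1, 1)`,
a monomial matrix of the cyclic shift `i ↦ i + 1`. Then `M = diag(I_{i+1}) + S` and
`L = S + diag(a) + diag(b) S⁻¹` factors as `L = R M` with `R = 1 + diag(V) S⁻¹`.
Since `S diag(d) = diag(d_{i+1}) S`, the two discrete Toda relations say exactly that
`M R = R' M'`, whence `L' M = R' M' M = M R M = M L`.
-/

/-- The Lax matrix `L(y)` of the `(g+1)`-periodic discrete Toda lattice
(indices are 0-based: position `(i,j)` here corresponds to `(i+1,j+1)` in 1-based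
notation).  Diagonal entries are `a_i = I_{i+1} + V_i`, the superdiagonal entries
are `1`, the subdiagonal entries are `b_i = I_i·V_i`, with `(−1)^g·b_1/y` added
in position `(1,g+1)` and `(−1)^g·y` added in position `(g+1,1)`. -/
noncomputable def laxMatrix (g : ℕ) (I V : Fin (g + 1) → ℂ) (y : ℂ) :
    Matrix (Fin (g + 1)) (Fin (g + 1)) ℂ := fun i j =>
  (if j = i then I (i + 1) + V i else 0)
  + (if (i : ℕ) + 1 = (j : ℕ) then 1 else 0)
  + (if (j : ℕ) + 1 = (i : ℕ) then I i * V i else 0)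
  + (if (i : ℕ) = 0 ∧ (j : ℕ) = g then (-1) ^ g * (I 0 * V 0) / y else 0)
  + (if (i : ℕ) = g ∧ (j : ℕ) = 0 then (-1) ^ g * y else 0)

/-- The auxiliary matrix `M(y)`: diagonal entries `I_{i+1}` (cyclically, so the last
diagonal entry is `I_1`), superdiagonal entries `1`, and `(−1)^g·y` in position
`(g+1,1)`. -/
noncomputable def mMatrix (g : ℕ) (I : Fin (g + 1) → ℂ) (y : ℂ) :
    Matrix (Fin (g + 1)) (Fin (g + 1)) ℂ := fun i j =>
  (if j = i then I (i + 1) else 0)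
  + (if (i : ℕ) + 1 = (j : ℕ) then 1 else 0)
  + (if (i : ℕ) = g ∧ (j : ℕ) = 0 then (-1) ^ g * y else 0)

open Matrix

section WeightedPermMatrix

variable {n R : Type*} [Fintype n] [DecidableEq n]

def weightedPermMatrix [Zero R] (σ : Equiv.Perm n) (c : n → R) : Matrix n n R :=
  fun i j => if j = σ i then c i else 0

variable [CommSemiring R]

theorem weightedPermMatrix_mul_diagonal (σ : Equiv.Perm n) (c d : n → R) :
    weightedPermMatrix σ c * diagonal d =
      diagonal (fun i => d (σ i)) * weightedPermMatrix σ c := by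
  ext i j
  simp only [mul_diagonal, diagonal_mul, weightedPermMatrix]
  split_ifs with h
  · rw [h, mul_comm]
  · simp

variable {σ : Equiv.Perm n} {c c' : n → R}

theorem weightedPermMatrix_mul_symm (hc : ∀ i, c i * c' (σ i) = 1) :
    weightedPermMatrix σ c * weightedPermMatrix σ.symm c' = 1 := by
  ext i j
  rw [mul_apply, Fintype.sum_eq_single (σ i) fun k hk => by simp [weightedPermMatrix, hk]]
  simp [weightedPermMatrix, one_apply, hc, eq_comm]

theorem weightedPermMatrix_symm_mul (hc : ∀ i, c i * c' (σ i) = 1) :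
    weightedPermMatrix σ.symm c' * weightedPermMatrix σ c = 1 := by
  ext i j
  rw [mul_apply, Fintype.sum_eq_single (σ.symm i) fun k hk => by simp [weightedPermMatrix, hk]]
  have hci := hc (σ.symm i)
  rw [Equiv.apply_symm_apply, mul_comm] at hci
  simp [weightedPermMatrix, one_apply, hci, eq_comm]

end WeightedPermMatrix

namespace DiscreteToda

section Factorization

variable {n R : Type*} [Fintype n] [DecidableEq n] [CommSemiring R]
  (σ : Equiv.Perm n) (c c' : n → R)

def laxForm (I V : n → R) : Matrix n n R :=
  weightedPermMatrix σ c + diagonal (fun i => I (σ i) + V i) +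
    diagonal (fun i => I i * V i) * weightedPermMatrix σ.symm c'

def upperFactor (I : n → R) : Matrix n n R :=
  diagonal (fun i => I (σ i)) + weightedPermMatrix σ c

def lowerFactor (V : n → R) : Matrix n n R :=
  1 + diagonal V * weightedPermMatrix σ.symm c'

variable {σ c c'}

theorem laxForm_eq_lowerFactor_mul_upperFactor (hc : ∀ i, c i * c' (σ i) = 1) (I V : n → R) :
    laxForm σ c c' I V = lowerFactor σ c' V * upperFactor σ c I := by
  have hT : weightedPermMatrix σ.symm c' * diagonal (fun i => I (σ i)) =
      diagonal I * weightedPermMatrix σ.symm c' := by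
    simp only [weightedPermMatrix_mul_diagonal, Equiv.apply_symm_apply]
  rw [laxForm, lowerFactor, upperFactor, ← diagonal_add, ← diagonal_mul_diagonal,
    (commute_diagonal I V).eq]
  simp only [add_mul, mul_add, one_mul, mul_one, mul_assoc, hT, weightedPermMatrix_symm_mul hc]
  abel

theorem upperFactor_mul_lowerFactor (hc : ∀ i, c i * c' (σ i) = 1) {I V I' V' : n → R}
    (hsum : ∀ i, I (σ i) + V (σ i) = I' (σ i) + V' i)
    (hprod : ∀ i, I (σ i) * V i = I' i * V' i) :
    upperFactor σ c I * lowerFactor σ c' V = lowerFactor σ c' V' * upperFactor σ c I' := by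
  rw [← laxForm_eq_lowerFactor_mul_upperFactor hc, laxForm, upperFactor, lowerFactor]
  simp only [← hsum, ← hprod, ← diagonal_add, ← diagonal_mul_diagonal]
  simp only [add_mul, mul_add, mul_one, ← mul_assoc, weightedPermMatrix_mul_diagonal]
  simp only [mul_assoc, weightedPermMatrix_mul_symm hc, mul_one]
  abel

end Factorization

variable {g : ℕ}

noncomputable def shiftWeight (g : ℕ) (y : ℂ) (i : Fin (g + 1)) : ℂ :=
  if i = Fin.last g then (-1) ^ g * y else 1

noncomputable def shiftWeightInv (g : ℕ) (y : ℂ) (i : Fin (g + 1)) : ℂ :=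
  if i = 0 then (-1) ^ g / y else 1

theorem shiftWeight_mul_shiftWeightInv {y : ℂ} (hy : y ≠ 0) (i : Fin (g + 1)) :
    shiftWeight g y i * shiftWeightInv g y (finRotate (g + 1) i) = 1 := by
  rw [finRotate_apply, shiftWeight, shiftWeightInv]
  split_ifs with hi hi' hi'
  · field_simp
    rw [← pow_mul, mul_comm, pow_mul, neg_one_sq, one_pow]
  · simp [hi] at hi'
  · rw [Fin.ext_iff, Fin.val_add_one, if_neg hi] at hi'
    simp at hi'
  · rw [mul_one]

theorem weightedPermMatrix_finRotate_shiftWeight_apply (y : ℂ) (i j : Fin (g + 1)) :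
    weightedPermMatrix (finRotate (g + 1)) (shiftWeight g y) i j =
      (if (i : ℕ) + 1 = j then 1 else 0) +
        (if (i : ℕ) = g ∧ (j : ℕ) = 0 then (-1) ^ g * y else 0) := by
  simp only [weightedPermMatrix, shiftWeight, finRotate_apply, Fin.ext_iff]
  rcases eq_or_ne i (Fin.last g) with rfl | hi
  · simp only [Fin.last_add_one, Fin.val_last, Fin.val_zero, true_and, if_true]
    split_ifs <;> first | omega | ring1
  · have hig := Fin.val_lt_last hi
    simp only [Fin.val_add_one, if_neg hi]
    split_ifs <;> first | omega | ring1

theorem weightedPermMatrix_finRotate_symm_shiftWeightInv_apply (y : ℂ) (i j : Fin (g + 1)) :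
    weightedPermMatrix (finRotate (g + 1)).symm (shiftWeightInv g y) i j =
      (if (j : ℕ) + 1 = i then 1 else 0) +
        (if (i : ℕ) = 0 ∧ (j : ℕ) = g then (-1) ^ g / y else 0) := by
  simp only [weightedPermMatrix, shiftWeightInv, finRotate_symm_apply, Fin.ext_iff]
  have hj := j.isLt
  rcases eq_or_ne i 0 with rfl | hi
  · simp only [Fin.coe_sub_one, Fin.val_zero, true_and, if_true]
    split_ifs <;> first | omega | ring1 | contradiction
  · have hi0 : (i : ℕ) ≠ 0 := Fin.val_ne_zero_iff.mpr hi
    simp only [Fin.coe_sub_one, if_neg hi, hi0, Fin.val_zero, false_and, if_false]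
    split_ifs <;> first | omega | ring1

theorem mMatrix_eq_upperFactor (I : Fin (g + 1) → ℂ) (y : ℂ) :
    mMatrix g I y = upperFactor (finRotate (g + 1)) (shiftWeight g y) I := by
  ext i j
  simp only [mMatrix, upperFactor, Matrix.add_apply,
    weightedPermMatrix_finRotate_shiftWeight_apply, diagonal_apply, finRotate_apply,
    eq_comm (a := i)]
  ring1

theorem laxMatrix_eq_laxForm (I V : Fin (g + 1) → ℂ) (y : ℂ) :
    laxMatrix g I V y =
      laxForm (finRotate (g + 1)) (shiftWeight g y) (shiftWeightInv g y) I V := by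
  ext i j
  simp only [laxMatrix, laxForm, Matrix.add_apply, diagonal_mul,
    weightedPermMatrix_finRotate_shiftWeight_apply,
    weightedPermMatrix_finRotate_symm_shiftWeightInv_apply, diagonal_apply, finRotate_apply,
    eq_comm (a := i), mul_add, mul_ite, mul_one, mul_zero]
  rcases eq_or_ne i 0 with rfl | hi
  · split_ifs <;> ring1
  · have hi0 : (i : ℕ) ≠ 0 := Fin.val_ne_zero_iff.mpr hi
    simp only [hi0, false_and, if_false]
    ring1

end DiscreteToda

open DiscreteToda

theorem dToda_lax_equation (g : ℕ) (I V I' V' : Fin (g + 1) → ℂ)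
    (h1 : ∀ i : Fin (g + 1), I' i = I i + V i - V' (i - 1))
    (h2 : ∀ i : Fin (g + 1), I' i * V' i = I (i + 1) * V i)
    (y : ℂ) (hy : y ≠ 0) :
    laxMatrix g I' V' y * mMatrix g I y = mMatrix g I y * laxMatrix g I V y := by
  have hc := shiftWeight_mul_shiftWeightInv (g := g) hy
  have hsum : ∀ i, I (finRotate (g + 1) i) + V (finRotate (g + 1) i) =
      I' (finRotate (g + 1) i) + V' i := fun i => by
    rw [finRotate_apply, h1, add_sub_cancel_right]
    ring
  have hprod : ∀ i, I (finRotate (g + 1) i) * V i = I' i * V' i := fun i => by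
    rw [finRotate_apply, h2]
  rw [laxMatrix_eq_laxForm, laxMatrix_eq_laxForm, mMatrix_eq_upperFactor,
    laxForm_eq_lowerFactor_mul_upperFactor hc, laxForm_eq_lowerFactor_mul_upperFactor hc,
    ← mul_assoc, upperFactor_mul_lowerFactor hc hsum hprod]
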